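/- Let T = {(x,y) ∈ ℝ² : 0 ≤ y ≤ x ≤ 1}, let f : T → ℝ and g : [0,1] → ℝ be continuous, and let k : T → ℝ be continuously differentiable with k_x(x,y) + k_y(x,y) = ∫_y^x k(x,ξ) f(ξ,y) dξ − f(x,y) on T and k(x,0) = ∫₀ˣ k(x,y) g(y) dy − g(x) for all x ∈ [0,1]. Suppose u : [0,∞) × [0,1] → ℝ is continuously differentiable and satisfies u_t(t,x) = u_x(t,x) + g(x) u(t,0) + ∫₀ˣ f(x,ξ) u(t,ξ) dξ for all t ≥ 0 and x ∈ [0,1], with the feedback boundary condition u(t,1) = ∫₀¹ k(1,y) u(t,y) dy. Then w(t,x) := u(t,x) − ∫₀ˣ k(x,ξ) u(t,ξ) dξ satisfies w_t(t,x) = w_x(t,x) for all t ≥ 0, x ∈ [0,1], and w(t,1) = 0 for all t ≥ 0; consequently w(t,x) = 0 for all t + x ≥ 1, so the closed-loop plant state converges to zero in finite time. -/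

import Mathlib

open Set

/-- The triangular domain `T = {(x,y) : 0 ≤ y ≤ x ≤ 1}`. -/
def Tri : Set (ℝ × ℝ) := {p | 0 ≤ p.2 ∧ p.2 ≤ p.1 ∧ p.1 ≤ 1}

/-!
Differentiating under the integral sign, `w_t = u_t − ∫₀ˣ k(x,ξ) u_t(t,ξ) dξ`, and by Leibniz'
rule `w_x = u_x − k(x,x) u − ∫₀ˣ k_x(x,ξ) u(t,ξ) dξ`. Substituting the plant equation into the
first formula, integrating `∫₀ˣ k u_x` by parts and exchanging the order of integration in the
term coming from `f`, the kernel PDE and boundary condition turn it into the second one. So `w`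
solves `w_t = w_x`, is constant along the characteristics `t + x = const`, and vanishes for
`t + x ≥ 1` because the feedback makes `w(t,1) = 0`.

To have continuous parametric integrals, all data are extended continuously off their closed
domains (Tietze), and `u` is replaced by `u(0,0) + ∫₀ˣ u_x(0,ξ) dξ + ∫₀ᵗ u_t(τ,x) dτ`, which is
defined and differentiable in `t` on all of `ℝ²`.
-/

open Function MeasureTheory Filter Topology

theorem ContinuousOn.exists_continuous_eqOn {X : Type*} [TopologicalSpace X] [NormalSpace X]
    {s : Set X} (hs : IsClosed s) {f : X → ℝ} (hf : ContinuousOn f s) :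
    ∃ F : X → ℝ, Continuous F ∧ EqOn F f s := by
  obtain ⟨F, hF⟩ := ContinuousMap.exists_restrict_eq hs ⟨s.domRestrict f, hf.domRestrict⟩
  exact ⟨F, F.continuous, fun x hx => congr($hF ⟨x, hx⟩)⟩

theorem ContinuousOn.exists_continuous_uncurry_eq {s : Set (ℝ × ℝ)} (hs : IsClosed s)
    {f : ℝ → ℝ → ℝ} (hf : ContinuousOn ↿f s) :
    ∃ F : ℝ → ℝ → ℝ, Continuous ↿F ∧ ∀ x y, (x, y) ∈ s → F x y = f x y := by
  obtain ⟨F, hF, hFf⟩ := hf.exists_continuous_eqOn hs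
  exact ⟨curry F, hF, fun x y h => hFf h⟩

theorem isClosed_Tri : IsClosed Tri :=
  (isClosed_le continuous_const continuous_snd).inter <|
    (isClosed_le continuous_snd continuous_fst).inter (isClosed_le continuous_fst continuous_const)

theorem uniqueDiffOn_Tri : UniqueDiffOn ℝ Tri := by
  refine uniqueDiffOn_convex (s := Tri) ?_ ⟨((3:ℝ) / 4, (1:ℝ) / 4), ?_⟩
  · rintro p ⟨hp₁, hp₂, hp₃⟩ q ⟨hq₁, hq₂, hq₃⟩ a b ha hb hab
    refine ⟨?_, ?_, ?_⟩ <;> simp only [Prod.smul_fst, Prod.smul_snd, Prod.fst_add,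
      Prod.snd_add, smul_eq_mul] <;> nlinarith
  · set O := {p : ℝ × ℝ | 0 < p.2 ∧ p.2 < p.1 ∧ p.1 < 1}
    have hO : IsOpen O := (isOpen_lt continuous_const continuous_snd).inter
      ((isOpen_lt continuous_snd continuous_fst).inter (isOpen_lt continuous_fst continuous_const))
    have hOT : O ⊆ Tri := fun p hp => ⟨hp.1.le, hp.2.1.le, hp.2.2.le⟩
    exact interior_maximal hOT hO (by norm_num [O])

namespace intervalIntegral

variable {E : Type*} [NormedAddCommGroup E] [NormedSpace ℝ E]

theorem integral_eq_sub_of_hasDerivWithinAt [CompleteSpace E] {f f' : ℝ → E} {a b : ℝ} (hab : a ≤ b)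
    (hf : ∀ x ∈ Icc a b, HasDerivWithinAt f (f' x) (Icc a b) x)
    (hf' : IntervalIntegrable f' volume a b) :
    ∫ x in a..b, f' x = f b - f a :=
  integral_eq_sub_of_hasDerivAt_of_le hab (fun x hx => (hf x hx).continuousWithinAt)
    (fun x hx => (hf x (Ioo_subset_Icc_self hx)).hasDerivAt (Icc_mem_nhds hx.1 hx.2)) hf'

@[fun_prop]
theorem continuous_parametric_intervalIntegral_of_continuous_lower {X : Type*}
    [TopologicalSpace X] {f : X → ℝ → E} (hf : Continuous ↿f) {s : X → ℝ} (hs : Continuous s)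
    (b : ℝ) : Continuous fun x => ∫ t in s x..b, f x t := by
  simp_rw [integral_symm b]
  fun_prop

theorem hasDerivAt_integral_of_continuous_deriv {F F' : ℝ → ℝ → E} (hF : ∀ t, Continuous (F t))
    (hF' : Continuous ↿F') (hFF' : ∀ t x, HasDerivAt (F · x) (F' t x) t) (a b t₀ : ℝ) :
    HasDerivAt (fun t => ∫ x in a..b, F t x) (∫ x in a..b, F' t₀ x) t₀ := by
  obtain ⟨C, hC⟩ := (isCompact_closedBall t₀ 1 |>.prod isCompact_uIcc).exists_bound_of_continuousOn
    hF'.continuousOn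
  refine (hasDerivAt_integral_of_dominated_loc_of_deriv_le (bound := fun _ => C)
    (Metric.closedBall_mem_nhds t₀ one_pos) (.of_forall fun t => (hF t).aestronglyMeasurable)
    ((hF t₀).intervalIntegrable _ _) (by fun_prop : Continuous (F' t₀)).aestronglyMeasurable
    (.of_forall fun x hx t ht => hC (t, x) ⟨ht, uIoc_subset_uIcc hx⟩) intervalIntegrable_const
    (.of_forall fun x _ t _ => hFF' t x)).2

theorem integral_integral_swap_triangle {Φ : ℝ → ℝ → E} (hΦ : Continuous ↿Φ) {a b : ℝ}
    (hab : a ≤ b) :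
    ∫ x in a..b, ∫ y in a..x, Φ x y = ∫ y in a..b, ∫ x in y..b, Φ x y := by
  set μ := volume.restrict (Ioc a b)
  set ψ : ℝ × ℝ → E := {p | p.2 ≤ p.1}.indicator ↿Φ
  have hψ : Integrable ψ (μ.prod μ) := by
    refine Integrable.indicator ?_ (measurableSet_le measurable_snd measurable_fst)
    rw [Measure.prod_restrict, ← Measure.volume_eq_prod]
    exact (hΦ.continuousOn.integrableOn_compact (isCompact_Icc.prod isCompact_Icc)).mono_set
      (prod_mono Ioc_subset_Icc_self Ioc_subset_Icc_self)
  have hL : ∀ x ∈ Ioc a b, ∫ y, ψ (x, y) ∂μ = ∫ y in a..x, Φ x y := by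
    intro x hx
    have hset : Ioc a b ∩ Iic x = Ioc a x := by rw [Ioc_inter_Iic, inf_eq_right.2 hx.2]
    rw [integral_of_le hx.1.le, ← hset, ← setIntegral_indicator measurableSet_Iic]
    rfl
  have hR : ∀ y ∈ Ioc a b, ∫ x, ψ (x, y) ∂μ = ∫ x in y..b, Φ x y := by
    intro y hy
    have hset : Ioc a b ∩ Ici y = Icc y b := by
      ext x
      simp only [mem_inter_iff, mem_Ioc, mem_Ici, mem_Icc]
      exact ⟨fun h => ⟨h.2, h.1.2⟩, fun h => ⟨⟨hy.1.trans_le h.1, h.2⟩, h.1⟩⟩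
    rw [integral_of_le hy.2, ← integral_Icc_eq_integral_Ioc (x := y), ← hset,
      ← setIntegral_indicator measurableSet_Ici]
    rfl
  rw [integral_of_le hab, integral_of_le hab, setIntegral_congr_fun measurableSet_Ioc
    (fun x hx => (hL x hx).symm), integral_integral_swap (f := fun x y => ψ (x, y)) hψ,
    setIntegral_congr_fun measurableSet_Ioc hR]

end intervalIntegral

section Transport

variable {W D : ℝ → ℝ → ℝ} {S : Set (ℝ × ℝ)}

theorem hasDerivAt_comp_characteristic (hS : IsOpen S) (hD : ContinuousOn ↿D S)
    (hWt : ∀ p ∈ S, HasDerivAt (W · p.2) (D p.1 p.2) p.1)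
    (hWx : ∀ p ∈ S, HasDerivAt (W p.1 ·) (D p.1 p.2) p.2) {t x r : ℝ}
    (hr : (t - r, x + r) ∈ S) : HasDerivAt (fun r => W (t - r) (x + r)) 0 r := by
  have hDc : ContinuousAt (ContinuousLinearMap.toSpanSingletonCLE (𝕜 := ℝ) ∘ ↿D) (t - r, x + r) :=
    ContinuousLinearMap.toSpanSingletonCLE.continuous.continuousAt.comp
      (hD.continuousAt (hS.mem_nhds hr))
  have hW := hasStrictFDerivAt_uncurry_coprod (f := W)
    (f₁ := fun a b => .toSpanSingleton ℝ (D a b)) (f₂ := fun a b => .toSpanSingleton ℝ (D a b))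
    ((hS.eventually_mem hr).mono hWt) ((hS.eventually_mem hr).mono hWx) hDc hDc
  have hγ : HasDerivAt (fun r => (t - r, x + r)) ((-1 : ℝ), (1 : ℝ)) r :=
    ((hasDerivAt_id r).const_sub t).prodMk ((hasDerivAt_id r).const_add x)
  have h := hW.hasFDerivAt.comp_hasDerivAt r hγ
  simp only [ContinuousLinearMap.coprod_apply, map_neg, neg_add_cancel] at h
  exact h

theorem eq_along_characteristic (hS : IsOpen S) (hW : Continuous ↿W) (hD : ContinuousOn ↿D S)
    (hWt : ∀ p ∈ S, HasDerivAt (W · p.2) (D p.1 p.2) p.1)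
    (hWx : ∀ p ∈ S, HasDerivAt (W p.1 ·) (D p.1 p.2) p.2) {t x s : ℝ} (hs : 0 ≤ s)
    (hseg : ∀ r ∈ Ioo 0 s, (t - r, x + r) ∈ S) : W (t - s) (x + s) = W t x := by
  rcases hs.eq_or_lt with rfl | hs
  · simp
  obtain ⟨c, -, hc⟩ := exists_hasDerivAt_eq_slope (fun r => W (t - r) (x + r)) (fun _ => 0) hs
    (hW.comp (by fun_prop : Continuous fun r => (t - r, x + r))).continuousOn
    (fun r hr => hasDerivAt_comp_characteristic hS hD hWt hWx (hseg r hr))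
  simpa [eq_comm, sub_eq_zero, hs.ne'] using hc

end Transport

noncomputable def volterra (K : ℝ → ℝ → ℝ) (v : ℝ → ℝ) (x : ℝ) : ℝ :=
  ∫ ξ in (0:ℝ)..x, K x ξ * v ξ

@[fun_prop]
theorem continuous_volterra {X : Type*} [TopologicalSpace X] {K : ℝ → ℝ → ℝ} {v : X → ℝ → ℝ}
    {s : X → ℝ} (hK : Continuous ↿K) (hv : Continuous ↿v) (hs : Continuous s) :
    Continuous fun x => volterra K (v x) (s x) := by
  unfold volterra
  fun_prop

theorem volterra_congr {K K' : ℝ → ℝ → ℝ} {v v' : ℝ → ℝ} {x : ℝ} (hx : 0 ≤ x)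
    (hK : ∀ ξ ∈ Icc 0 x, K x ξ = K' x ξ) (hv : ∀ ξ ∈ Icc 0 x, v ξ = v' ξ) :
    volterra K v x = volterra K' v' x :=
  intervalIntegral.integral_congr fun ξ hξ => by
    rw [uIcc_of_le hx] at hξ
    simp only [hK ξ hξ, hv ξ hξ]

theorem hasDerivWithinAt_volterra {K Kx : ℝ → ℝ → ℝ} {v : ℝ → ℝ} (hK : Continuous ↿K)
    (hKx : Continuous ↿Kx) (hv : Continuous v)
    (hKKx : ∀ x y, (x, y) ∈ Tri → HasDerivWithinAt (K · y) (Kx x y) (Icc y 1) x) {x : ℝ}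
    (hx : x ∈ Icc (0:ℝ) 1) :
    HasDerivWithinAt (volterra K v) (K x x * v x + volterra Kx v x) (Icc 0 1) x := by
  have hrep : ∀ y ∈ Icc (0:ℝ) 1,
      volterra K v y = ∫ z in 0..y, (K z z * v z + volterra Kx v z) := by
    intro y hy
    have hK_ftc : EqOn (fun ξ => K y ξ * v ξ) (fun ξ => K ξ ξ * v ξ + ∫ z in ξ..y, Kx z ξ * v ξ)
        (uIcc 0 y) := by
      intro ξ hξ
      rw [uIcc_of_le hy.1] at hξ
      dsimp only
      rw [intervalIntegral.integral_mul_const, intervalIntegral.integral_eq_sub_of_hasDerivWithinAt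
        hξ.2 (fun z hz => (hKKx z ξ ⟨hξ.1, hz.1, hz.2.trans hy.2⟩).mono (Icc_subset_Icc_right hy.2))
        ((by fun_prop : Continuous fun z => Kx z ξ).intervalIntegrable _ _)]
      ring
    rw [volterra, intervalIntegral.integral_congr hK_ftc, intervalIntegral.integral_add,
      intervalIntegral.integral_add, ← intervalIntegral.integral_integral_swap_triangle
        (Φ := fun z ξ => Kx z ξ * v ξ) (by fun_prop) hy.1]
    · rfl
    all_goals apply Continuous.intervalIntegrable; fun_prop
  have hcont : Continuous fun z => K z z * v z + volterra Kx v z := by fun_prop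
  exact (hcont.integral_hasStrictDerivAt 0 x).hasDerivAt.hasDerivWithinAt.congr hrep (hrep x hx)

structure IsBacksteppingKernel (F : ℝ → ℝ → ℝ) (G : ℝ → ℝ) (K Kx Ky : ℝ → ℝ → ℝ) : Prop where
  continuous_F : Continuous ↿F
  continuous_G : Continuous G
  continuous_K : Continuous ↿K
  continuous_Kx : Continuous ↿Kx
  continuous_Ky : Continuous ↿Ky
  hasDerivWithinAt_fst : ∀ x y, (x, y) ∈ Tri → HasDerivWithinAt (K · y) (Kx x y) (Icc y 1) x
  hasDerivWithinAt_snd : ∀ x y, (x, y) ∈ Tri → HasDerivWithinAt (K x ·) (Ky x y) (Icc 0 x) y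
  -- `kx 1 1` and `ky 0 0` are arbitrary, so only the interior version transfers from `k`
  pde : ∀ x y, 0 < y → y < x → x ≤ 1 → Kx x y + Ky x y = (∫ ξ in y..x, K x ξ * F ξ y) - F x y
  bc : ∀ x ∈ Icc (0:ℝ) 1, K x 0 = volterra K G x - G x

theorem IsBacksteppingKernel.sub_volterra_eq {F : ℝ → ℝ → ℝ} {G : ℝ → ℝ} {K Kx Ky : ℝ → ℝ → ℝ}
    (hk : IsBacksteppingKernel F G K Kx Ky) {v vx vt : ℝ → ℝ} (hv : Continuous v)
    (hvx : Continuous vx) (hder : ∀ ξ ∈ Icc (0:ℝ) 1, HasDerivWithinAt v (vx ξ) (Icc 0 1) ξ)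
    (hpde : ∀ ξ ∈ Icc (0:ℝ) 1, vt ξ = vx ξ + G ξ * v 0 + volterra F v ξ) {z : ℝ}
    (hz : z ∈ Icc (0:ℝ) 1) :
    vt z - volterra K vt z = vx z - K z z * v z - volterra Kx v z := by
  obtain ⟨hF, hG, hK, hKx, hKy, -, hK_snd, hkpde, hbc⟩ := hk
  have hsub : uIcc 0 z ⊆ Icc 0 1 := by rw [uIcc_of_le hz.1]; exact Icc_subset_Icc_right hz.2
  have hplant : volterra K vt z = volterra K vx z + v 0 * volterra K G z
      + ∫ ξ in 0..z, K z ξ * volterra F v ξ := by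
    have hsubst : EqOn (fun ξ => K z ξ * vt ξ)
        (fun ξ => K z ξ * vx ξ + v 0 * (K z ξ * G ξ) + K z ξ * volterra F v ξ) (uIcc 0 z) :=
      fun ξ hξ => by simp only [hpde ξ (hsub hξ)]; ring
    rw [volterra, intervalIntegral.integral_congr hsubst, intervalIntegral.integral_add,
      intervalIntegral.integral_add, intervalIntegral.integral_const_mul]
    · rfl
    all_goals apply Continuous.intervalIntegrable; fun_prop
  have hparts : volterra K vx z = K z z * v z - K z 0 * v 0 - volterra Ky v z := by
    refine intervalIntegral.integral_mul_deriv_eq_deriv_mul_of_hasDerivWithinAt (u := K z)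
      (fun ξ hξ => ?_) (fun ξ hξ => (hder ξ (hsub hξ)).mono hsub)
      ((by fun_prop : Continuous (Ky z)).intervalIntegrable _ _) (hvx.intervalIntegrable _ _)
    rw [uIcc_of_le hz.1] at hξ ⊢
    exact hK_snd z ξ ⟨hξ.1, hξ.2, hz.2⟩
  have hswap : ∫ ξ in 0..z, K z ξ * volterra F v ξ
      = ∫ ξ in 0..z, (∫ s in ξ..z, K z s * F s ξ) * v ξ := by
    simp_rw [volterra, ← intervalIntegral.integral_const_mul, ← intervalIntegral.integral_mul_const,
      ← mul_assoc]
    exact intervalIntegral.integral_integral_swap_triangle (Φ := fun s ξ => K z s * F s ξ * v ξ)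
      (by fun_prop) hz.1
  have hkernel : ∫ ξ in 0..z, (∫ s in ξ..z, K z s * F s ξ) * v ξ
      = volterra Kx v z + volterra Ky v z + volterra F v z := by
    rw [volterra, volterra, volterra, ← intervalIntegral.integral_add,
      ← intervalIntegral.integral_add]
    · refine intervalIntegral.integral_congr_Ioo_of_le hz.1 fun ξ hξ => ?_
      rw [sub_eq_iff_eq_add.mp (hkpde z ξ hξ.1 hξ.2 hz.2).symm]
      ring
    all_goals apply Continuous.intervalIntegrable; fun_prop
  rw [hpde z hz, hplant, hparts, hswap, hkernel, hbc z hz]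
  ring

structure IsPlantSolution (F : ℝ → ℝ → ℝ) (G : ℝ → ℝ) (U Ut Ux : ℝ → ℝ → ℝ) : Prop where
  continuous_U : Continuous ↿U
  continuous_Ut : Continuous ↿Ut
  continuous_Ux : Continuous ↿Ux
  hasDerivAt_fst : ∀ t x, HasDerivAt (U · x) (Ut t x) t
  hasDerivWithinAt_snd : ∀ t ≥ 0, ∀ x ∈ Icc (0:ℝ) 1, HasDerivWithinAt (U t ·) (Ux t x) (Icc 0 1) x
  pde : ∀ t ≥ 0, ∀ x ∈ Icc (0:ℝ) 1, Ut t x = Ux t x + G x * U t 0 + volterra F (U t) x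

namespace IsPlantSolution

variable {F : ℝ → ℝ → ℝ} {G : ℝ → ℝ} {U Ut Ux : ℝ → ℝ → ℝ} {K Kx Ky : ℝ → ℝ → ℝ}

theorem hasDerivAt_fst_sub_volterra (hU : IsPlantSolution F G U Ut Ux) (hK : Continuous ↿K)
    (t x : ℝ) :
    HasDerivAt (fun s => U s x - volterra K (U s) x) (Ut t x - volterra K (Ut t) x) t :=
  have hU' := hU.continuous_U
  have hUt := hU.continuous_Ut
  (hU.hasDerivAt_fst t x).sub <| intervalIntegral.hasDerivAt_integral_of_continuous_deriv
    (F := fun s ξ => K x ξ * U s ξ) (fun s => by fun_prop) (by fun_prop)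
    (fun s ξ => (hU.hasDerivAt_fst s ξ).const_mul (K x ξ)) 0 x t

theorem hasDerivWithinAt_snd_sub_volterra (hU : IsPlantSolution F G U Ut Ux)
    (hk : IsBacksteppingKernel F G K Kx Ky) {t x : ℝ} (ht : 0 ≤ t) (hx : x ∈ Icc (0:ℝ) 1) :
    HasDerivWithinAt (fun y => U t y - volterra K (U t) y) (Ut t x - volterra K (Ut t) x)
      (Icc 0 1) x := by
  have hU' := hU.continuous_U
  have hUx := hU.continuous_Ux
  rw [hk.sub_volterra_eq (by fun_prop) (by fun_prop) (hU.hasDerivWithinAt_snd t ht)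
    (hU.pde t ht) hx, sub_sub]
  exact (hU.hasDerivWithinAt_snd t ht x hx).sub (hasDerivWithinAt_volterra hk.continuous_K
    hk.continuous_Kx (by fun_prop) hk.hasDerivWithinAt_fst hx)

theorem sub_volterra_eq_of_one_le_add (hU : IsPlantSolution F G U Ut Ux)
    (hk : IsBacksteppingKernel F G K Kx Ky) {t x : ℝ} (hx : x ∈ Icc (0:ℝ) 1) (htx : 1 ≤ t + x) :
    U t x - volterra K (U t) x = U (t + x - 1) 1 - volterra K (U (t + x - 1)) 1 := by
  have hU' := hU.continuous_U
  have hUt := hU.continuous_Ut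
  have hK := hk.continuous_K
  have h := eq_along_characteristic (W := fun t x => U t x - volterra K (U t) x)
    (D := fun t x => Ut t x - volterra K (Ut t) x) (S := Ioi 0 ×ˢ Ioo 0 1)
    (isOpen_Ioi.prod isOpen_Ioo) (by fun_prop)
    (by fun_prop : Continuous fun p : ℝ × ℝ => Ut p.1 p.2 - volterra K (Ut p.1) p.2).continuousOn
    (fun p _ => hU.hasDerivAt_fst_sub_volterra hK p.1 p.2)
    (fun p hp => (hU.hasDerivWithinAt_snd_sub_volterra hk (le_of_lt hp.1)
      (Ioo_subset_Icc_self hp.2)).hasDerivAt (Icc_mem_nhds hp.2.1 hp.2.2))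
    (t := t) (x := x) (s := 1 - x) (by linarith [hx.2])
    (fun r hr => ⟨by simp only [mem_Ioi]; linarith [hr.2],
      by constructor <;> linarith [hr.1, hr.2, hx.1]⟩)
  rw [show t - (1 - x) = t + x - 1 by ring, add_sub_cancel] at h
  exact h.symm

end IsPlantSolution

theorem exists_isBacksteppingKernel {f k kx ky : ℝ → ℝ → ℝ} {g : ℝ → ℝ}
    (hf : ContinuousOn ↿f Tri) (hg : ContinuousOn g (Icc 0 1)) (hk : ContDiffOn ℝ 1 ↿k Tri)
    (hkx : ∀ x y, (x, y) ∈ Tri → HasDerivWithinAt (k · y) (kx x y) (Icc y 1) x)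
    (hky : ∀ x y, (x, y) ∈ Tri → HasDerivWithinAt (k x ·) (ky x y) (Icc 0 x) y)
    (hk_pde : ∀ x y, (x, y) ∈ Tri → kx x y + ky x y = (∫ ξ in y..x, k x ξ * f ξ y) - f x y)
    (hk_bc : ∀ x ∈ Icc (0:ℝ) 1, k x 0 = volterra k g x - g x) :
    ∃ F G K Kx Ky, IsBacksteppingKernel F G K Kx Ky ∧ (∀ x y, (x, y) ∈ Tri → F x y = f x y) ∧
      (∀ x ∈ Icc (0:ℝ) 1, G x = g x) ∧ ∀ x y, (x, y) ∈ Tri → K x y = k x y := by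
  have hk' := hk.continuousOn_fderivWithin uniqueDiffOn_Tri le_rfl
  obtain ⟨F, hF, hFf⟩ := hf.exists_continuous_uncurry_eq isClosed_Tri
  obtain ⟨G, hG, hGg⟩ := hg.exists_continuous_eqOn isClosed_Icc
  obtain ⟨K, hK, hKk⟩ := hk.continuousOn.exists_continuous_uncurry_eq isClosed_Tri
  obtain ⟨Kx, hKx, hKx_eq⟩ := (ContinuousOn.exists_continuous_uncurry_eq isClosed_Tri
    (f := fun x y => fderivWithin ℝ ↿k Tri (x, y) (1, 0)) (hk'.clm_apply continuousOn_const))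
  obtain ⟨Ky, hKy, hKy_eq⟩ := (ContinuousOn.exists_continuous_uncurry_eq isClosed_Tri
    (f := fun x y => fderivWithin ℝ ↿k Tri (x, y) (0, 1)) (hk'.clm_apply continuousOn_const))
  have hk_fst : ∀ x y, (x, y) ∈ Tri → HasDerivWithinAt (k · y) (Kx x y) (Icc y 1) x := by
    intro x y hxy
    rw [hKx_eq x y hxy]
    exact (hk.differentiableOn one_ne_zero _ hxy).hasFDerivWithinAt.comp_hasDerivWithinAt x
      ((hasDerivAt_id x).prodMk (hasDerivAt_const x y)).hasDerivWithinAt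
      fun z (hz : z ∈ Icc y 1) => show (z, y) ∈ Tri from ⟨hxy.1, hz.1, hz.2⟩
  have hk_snd : ∀ x y, (x, y) ∈ Tri → HasDerivWithinAt (k x ·) (Ky x y) (Icc 0 x) y := by
    intro x y hxy
    rw [hKy_eq x y hxy]
    exact (hk.differentiableOn one_ne_zero _ hxy).hasFDerivWithinAt.comp_hasDerivWithinAt y
      ((hasDerivAt_const y x).prodMk (hasDerivAt_id y)).hasDerivWithinAt
      fun z (hz : z ∈ Icc 0 x) => show (x, z) ∈ Tri from ⟨hz.1, hz.2, hxy.2.2⟩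
  refine ⟨F, G, K, Kx, Ky, ⟨hF, hG, hK, hKx, hKy, fun x y hxy => ?_, fun x y hxy => ?_,
    fun x y hy hyx hx => ?_, fun x hx => ?_⟩, hFf, hGg, hKk⟩
  · exact (hk_fst x y hxy).congr (fun z hz => hKk z y ⟨hxy.1, hz.1, hz.2⟩) (hKk x y hxy)
  · exact (hk_snd x y hxy).congr (fun z hz => hKk x z ⟨hz.1, hz.2, hxy.2.2⟩) (hKk x y hxy)
  · have hxy : (x, y) ∈ Tri := ⟨hy.le, hyx.le, hx⟩
    rw [(uniqueDiffOn_Icc (hyx.trans_le hx) x ⟨hyx.le, hx⟩).eq_deriv _ (hk_fst x y hxy)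
        (hkx x y hxy),
      (uniqueDiffOn_Icc (hy.trans hyx) y ⟨hy.le, hyx.le⟩).eq_deriv _ (hk_snd x y hxy) (hky x y hxy),
      hk_pde x y hxy, hFf x y hxy]
    congr 1
    refine intervalIntegral.integral_congr fun ξ hξ => ?_
    rw [uIcc_of_le hyx.le] at hξ
    simp only [hKk x ξ ⟨hy.le.trans hξ.1, hξ.2, hx⟩, hFf ξ y ⟨hy.le, hξ.1, hξ.2.trans hx⟩]
  · rw [hKk x 0 ⟨le_rfl, hx.1, hx.2⟩, hGg hx, volterra_congr hx.1
      (fun ξ hξ => hKk x ξ ⟨hξ.1, hξ.2, hx.2⟩) (fun ξ hξ => hGg ⟨hξ.1, hξ.2.trans hx.2⟩)]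
    exact hk_bc x hx

theorem exists_isPlantSolution {f F : ℝ → ℝ → ℝ} {g G : ℝ → ℝ}
    (hFf : ∀ x y, (x, y) ∈ Tri → F x y = f x y) (hGg : ∀ x ∈ Icc (0:ℝ) 1, G x = g x)
    {u ut ux : ℝ → ℝ → ℝ}
    (hut : ∀ t ∈ Ici (0:ℝ), ∀ x ∈ Icc (0:ℝ) 1, HasDerivWithinAt (u · x) (ut t x) (Ici 0) t)
    (hux : ∀ t ∈ Ici (0:ℝ), ∀ x ∈ Icc (0:ℝ) 1, HasDerivWithinAt (u t ·) (ux t x) (Icc 0 1) x)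
    (hut_cont : ContinuousOn ↿ut (Ici 0 ×ˢ Icc 0 1))
    (hux_cont : ContinuousOn ↿ux (Ici 0 ×ˢ Icc 0 1))
    (hpde : ∀ t ∈ Ici (0:ℝ), ∀ x ∈ Icc (0:ℝ) 1,
      ut t x = ux t x + g x * u t 0 + volterra f (u t) x) :
    ∃ U Ut Ux, IsPlantSolution F G U Ut Ux ∧ ∀ t ∈ Ici (0:ℝ), ∀ x ∈ Icc (0:ℝ) 1, U t x = u t x := by
  have hclosed : IsClosed (Ici (0:ℝ) ×ˢ Icc (0:ℝ) 1) := isClosed_Ici.prod isClosed_Icc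
  obtain ⟨Ut, hUt, hUt_eq⟩ := hut_cont.exists_continuous_uncurry_eq hclosed
  obtain ⟨Ux, hUx, hUx_eq⟩ := hux_cont.exists_continuous_uncurry_eq hclosed
  set U : ℝ → ℝ → ℝ := fun t x => u 0 0 + (∫ ξ in 0..x, Ux 0 ξ) + ∫ τ in 0..t, Ut τ x
  have hUu : ∀ t ∈ Ici (0:ℝ), ∀ x ∈ Icc (0:ℝ) 1, U t x = u t x := by
    intro t ht x hx
    have hx' : ∫ ξ in 0..x, Ux 0 ξ = u 0 x - u 0 0 :=
      intervalIntegral.integral_eq_sub_of_hasDerivWithinAt hx.1 (fun ξ hξ => by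
        rw [hUx_eq 0 ξ ⟨self_mem_Ici, hξ.1, hξ.2.trans hx.2⟩]
        exact (hux 0 self_mem_Ici ξ ⟨hξ.1, hξ.2.trans hx.2⟩).mono (Icc_subset_Icc_right hx.2))
        ((by fun_prop : Continuous (Ux 0)).intervalIntegrable _ _)
    have ht' : ∫ τ in 0..t, Ut τ x = u t x - u 0 x :=
      intervalIntegral.integral_eq_sub_of_hasDerivWithinAt ht (fun τ hτ => by
        rw [hUt_eq τ x ⟨hτ.1, hx⟩]
        exact (hut τ hτ.1 x hx).mono Icc_subset_Ici_self)
        ((by fun_prop : Continuous fun τ => Ut τ x).intervalIntegrable _ _)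
    simp only [U, hx', ht']
    ring
  refine ⟨U, Ut, Ux, ⟨by fun_prop, hUt, hUx, fun t x => ?_, fun t ht x hx => ?_,
    fun t ht x hx => ?_⟩, hUu⟩
  · exact ((by fun_prop : Continuous fun τ => Ut τ x).integral_hasStrictDerivAt 0 t).hasDerivAt
      |>.const_add _
  · rw [hUx_eq t x ⟨ht, hx⟩]
    exact (hux t ht x hx).congr (fun y hy => hUu t ht y hy) (hUu t ht x hx)
  · rw [hUt_eq t x ⟨ht, hx⟩, hUx_eq t x ⟨ht, hx⟩, hGg x hx, hUu t ht 0 ⟨le_rfl, zero_le_one⟩,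
      volterra_congr hx.1 (fun ξ hξ => hFf x ξ ⟨hξ.1, hξ.2, hx.2⟩)
        (fun ξ hξ => hUu t ht ξ ⟨hξ.1, hξ.2.trans hx.2⟩)]
    exact hpde t ht x hx

theorem hyperbolic_backstepping_finite_time
    (f : ℝ → ℝ → ℝ) (hf : ContinuousOn (fun p : ℝ × ℝ => f p.1 p.2) Tri)
    (g : ℝ → ℝ) (hg : ContinuousOn g (Icc 0 1))
    -- the kernel k, continuously differentiable on T, with partial derivatives kx, ky
    (k kx ky : ℝ → ℝ → ℝ)
    (hk_C1 : ContDiffOn ℝ 1 (fun p : ℝ × ℝ => k p.1 p.2) Tri)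
    (hkx : ∀ x y : ℝ, (x, y) ∈ Tri →
      HasDerivWithinAt (fun z => k z y) (kx x y) (Icc y 1) x)
    (hky : ∀ x y : ℝ, (x, y) ∈ Tri →
      HasDerivWithinAt (fun z => k x z) (ky x y) (Icc 0 x) y)
    -- the kernel PDE
    (hk_pde : ∀ x y : ℝ, (x, y) ∈ Tri →
      kx x y + ky x y = (∫ ξ in y..x, k x ξ * f ξ y) - f x y)
    -- the kernel boundary condition
    (hk_bc : ∀ x ∈ Icc (0:ℝ) 1, k x 0 = (∫ y in (0:ℝ)..x, k x y * g y) - g x)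
    -- u is continuously differentiable on [0,∞) × [0,1], with partial derivatives ut, ux
    (u ut ux : ℝ → ℝ → ℝ)
    (hut : ∀ t ∈ Ici (0:ℝ), ∀ x ∈ Icc (0:ℝ) 1,
      HasDerivWithinAt (fun s => u s x) (ut t x) (Ici 0) t)
    (hux : ∀ t ∈ Ici (0:ℝ), ∀ x ∈ Icc (0:ℝ) 1,
      HasDerivWithinAt (fun y => u t y) (ux t x) (Icc 0 1) x)
    (hut_cont : ContinuousOn (fun p : ℝ × ℝ => ut p.1 p.2) (Ici 0 ×ˢ Icc 0 1))
    (hux_cont : ContinuousOn (fun p : ℝ × ℝ => ux p.1 p.2) (Ici 0 ×ˢ Icc 0 1))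
    -- the plant PIDE
    (hpde : ∀ t ∈ Ici (0:ℝ), ∀ x ∈ Icc (0:ℝ) 1,
      ut t x = ux t x + g x * u t 0 + ∫ ξ in (0:ℝ)..x, f x ξ * u t ξ)
    -- the backstepping boundary feedback
    (hfeedback : ∀ t ∈ Ici (0:ℝ), u t 1 = ∫ y in (0:ℝ)..1, k 1 y * u t y) :
    let w : ℝ → ℝ → ℝ := fun t x => u t x - ∫ ξ in (0:ℝ)..x, k x ξ * u t ξ
    (∃ wder : ℝ → ℝ → ℝ,
      ∀ t ∈ Ici (0:ℝ), ∀ x ∈ Icc (0:ℝ) 1,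
        HasDerivWithinAt (fun s => w s x) (wder t x) (Ici 0) t ∧
        HasDerivWithinAt (fun y => w t y) (wder t x) (Icc 0 1) x) ∧
    (∀ t ∈ Ici (0:ℝ), w t 1 = 0) ∧
    (∀ t ∈ Ici (0:ℝ), ∀ x ∈ Icc (0:ℝ) 1, 1 ≤ t + x → w t x = 0) := by
  intro w
  obtain ⟨F, G, K, Kx, Ky, hker, hFf, hGg, hKk⟩ :=
    exists_isBacksteppingKernel hf hg hk_C1 hkx hky hk_pde hk_bc
  obtain ⟨U, Ut, Ux, hU, hUu⟩ := exists_isPlantSolution hFf hGg hut hux hut_cont hux_cont hpde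
  have hWw : ∀ t ∈ Ici (0:ℝ), ∀ x ∈ Icc (0:ℝ) 1, U t x - volterra K (U t) x = w t x := by
    intro t ht x hx
    rw [hUu t ht x hx, volterra_congr hx.1 (fun ξ hξ => hKk x ξ ⟨hξ.1, hξ.2, hx.2⟩)
      (fun ξ hξ => hUu t ht ξ ⟨hξ.1, hξ.2.trans hx.2⟩)]
    rfl
  have hw1 : ∀ t ∈ Ici (0:ℝ), w t 1 = 0 := fun t ht => sub_eq_zero.2 (hfeedback t ht)
  refine ⟨⟨fun t x => Ut t x - volterra K (Ut t) x, fun t ht x hx => ⟨?_, ?_⟩⟩, hw1,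
    fun t ht x hx htx => ?_⟩
  · exact (hU.hasDerivAt_fst_sub_volterra hker.continuous_K t x).hasDerivWithinAt.congr
      (fun s hs => (hWw s hs x hx).symm) (hWw t ht x hx).symm
  · exact (hU.hasDerivWithinAt_snd_sub_volterra hker ht hx).congr
      (fun y hy => (hWw t ht y hy).symm) (hWw t ht x hx).symm
  · have ht' : t + x - 1 ∈ Ici (0:ℝ) := by simp only [mem_Ici]; linarith [hx.2]
    rw [← hWw t ht x hx, hU.sub_volterra_eq_of_one_le_add hker hx htx,
      hWw _ ht' 1 ⟨zero_le_one, le_rfl⟩]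
    exact hw1 _ ht'
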